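/- arXiv:0801.3016 — 5 statements merged into one kernel-verified Lean document; each statement's English description precedes it below -/
import Mathlib

section
/- Let A be an abelian category in which every object has finite length, let B ⊆ A be a Serre subcategory, and let i : B → A denote the inclusion functor. Then i admits a left adjoint and a right adjoint. (The right adjoint sends c to its maximal subobject in B; the left adjoint sends c to the quotient of c by the minimal subobject with quotient in B.) -/
open CategoryTheory Limits

universe v u

/-- An object of an abelian category has finite length: it admits a finite
composition series. -/
inductive ObjFiniteLength {C : Type u} [Category.{v} C] [Abelian C] : C → Prop
  | of_isZero (X : C) : IsZero X → ObjFiniteLength X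
  | of_shortExact (S : ShortComplex C) : S.ShortExact → ObjFiniteLength S.X₁ →
      Simple S.X₃ → ObjFiniteLength S.X₂

/-!
Finite length makes every subobject lattice both Noetherian and Artinian: sending a subobject
of the middle term of a short exact sequence to its pullback to the kernel and its image in the
cokernel is strictly monotone, so both chain conditions pass to extensions, and a simple object
has only two subobjects. In a Noetherian object the subobjects lying in `P` are closed under
binary suprema (a supremum is a quotient of a biproduct) and contain `⊥`, so there is a largest
one, which is the coreflection of the object into `P`. The reflection is the same construction
in `Cᵒᵖ`, where Artinian objects become Noetherian.
-/

theorem strictMono_prodMk_of_monotone {α β γ : Type*} [Preorder α] [Preorder β] [Preorder γ]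
    {f : α → β} {g : α → γ} (hf : Monotone f) (hg : Monotone g)
    (h : ∀ a b, a ≤ b → f b ≤ f a → g b ≤ g a → b ≤ a) :
    StrictMono fun a => (f a, g a) := by
  intro a b hab
  refine lt_of_le_not_ge ⟨hf hab.le, hg hab.le⟩ ?_
  rintro ⟨hfba, hgba⟩
  exact hab.not_ge (h a b hab.le hfba hgba)

theorem SupClosed.exists_isGreatest {α : Type*} [SemilatticeSup α] [WellFoundedGT α] {s : Set α}
    (hs : SupClosed s) (hne : s.Nonempty) : ∃ m, IsGreatest s m := by
  obtain ⟨m, hm, hmax⟩ := wellFounded_gt.has_min s hne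
  refine ⟨m, hm, fun a ha => ?_⟩
  have hsup : m ⊔ a = m := (le_sup_left.lt_or_eq.resolve_left (hmax _ (hs hm ha))).symm
  exact hsup ▸ le_sup_right

namespace CategoryTheory

variable {C : Type u} [Category.{v} C] [Abelian C]

theorem monotone_imageSubobject_arrow_comp {X Y : C} (g : X ⟶ Y) :
    Monotone fun A : Subobject X => imageSubobject (A.arrow ≫ g) := by
  intro A B hAB
  dsimp only
  rw [← Subobject.ofLE_arrow hAB, Category.assoc]
  exact imageSubobject_comp_le _ _

theorem imageSubobject_factors_up_to_refinements {X Y T : C} {f : X ⟶ Y} {y : T ⟶ Y}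
    (hy : (imageSubobject f).Factors y) :
    ∃ (T' : C) (π : T' ⟶ T) (_ : Epi π) (x : T' ⟶ X), π ≫ y = x ≫ f := by
  obtain ⟨T', π, hπ, x, hx⟩ :=
    surjective_up_to_refinements_of_epi (factorThruImageSubobject f)
      ((imageSubobject f).factorThru y hy)
  refine ⟨T', π, hπ, x, ?_⟩
  simpa using hx =≫ (imageSubobject f).arrow

theorem Subobject.imageSubobject_biprod_desc_arrow {X : C} (A B : Subobject X) :
    imageSubobject (biprod.desc A.arrow B.arrow) = A ⊔ B := by
  apply le_antisymm
  · calc imageSubobject (biprod.desc A.arrow B.arrow)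
        = imageSubobject (biprod.desc (Subobject.ofLE A (A ⊔ B) le_sup_left)
            (Subobject.ofLE B (A ⊔ B) le_sup_right) ≫ (A ⊔ B).arrow) := by
          congr 1
          ext <;> simp
      _ ≤ imageSubobject (A ⊔ B).arrow := imageSubobject_comp_le _ _
      _ = A ⊔ B := by rw [imageSubobject_mono, Subobject.mk_arrow]
  · refine sup_le ?_ ?_
    · calc A = imageSubobject (biprod.inl ≫ biprod.desc A.arrow B.arrow) := by
            rw [biprod.inl_desc, imageSubobject_mono, Subobject.mk_arrow]
        _ ≤ _ := imageSubobject_comp_le _ _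
    · calc B = imageSubobject (biprod.inr ≫ biprod.desc A.arrow B.arrow) := by
            rw [biprod.inr_desc, imageSubobject_mono, Subobject.mk_arrow]
        _ ≤ _ := imageSubobject_comp_le _ _

theorem Subobject.isZero_bot (X : C) : IsZero ((⊥ : Subobject X) : C) :=
  IsZero.of_mono_eq_zero _ Subobject.bot_arrow

theorem isNoetherianObject_op (X : C) [IsArtinianObject X] : IsNoetherianObject (Opposite.op X) :=
  ⟨(Abelian.subobjectIsoSubobjectOp X).symm.strictMono.wellFoundedLT⟩

theorem ShortComplex.ShortExact.le_of_pullback_le_of_imageSubobject_le {S : ShortComplex C}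
    (hS : S.ShortExact) {A B : Subobject S.X₂} (hAB : A ≤ B)
    (h₁ : (Subobject.pullback S.f).obj B ≤ (Subobject.pullback S.f).obj A)
    (h₂ : imageSubobject (B.arrow ≫ S.g) ≤ imageSubobject (A.arrow ≫ S.g)) : B ≤ A := by
  set ι := Subobject.ofLE A B hAB
  suffices Epi ι by
    have := isIso_of_mono_of_epi ι
    exact Subobject.le_of_comm (inv ι) (by simp [ι])
  rw [epi_iff_surjective_up_to_refinements]
  intro T b
  -- Lift the image of `b` in `X₃` to `A`; the difference then comes from `X₁`, hence from `A`.
  obtain ⟨T₁, π₁, _, a, ha⟩ := imageSubobject_factors_up_to_refinements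
    (Subobject.factors_of_le _ h₂ (imageSubobject_factors_comp_self _ b))
  obtain ⟨T₂, π₂, _, x, hx⟩ :=
    hS.exact.exact_up_to_refinements (π₁ ≫ b ≫ B.arrow - a ≫ A.arrow)
      (by simp [Preadditive.sub_comp, ha])
  have hxA : A.Factors (x ≫ S.f) := by
    rw [← pullback_factors_iff]
    refine Subobject.factors_of_le _ h₁ ?_
    rw [pullback_factors_iff, ← hx, ← Subobject.ofLE_arrow hAB]
    simpa only [← Preadditive.comp_sub, ← Preadditive.sub_comp, ← Category.assoc]
      using Subobject.factors_comp_arrow _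
  refine ⟨T₂, π₂ ≫ π₁, epi_comp _ _, A.factorThru _ hxA + π₂ ≫ a, ?_⟩
  rw [← cancel_mono B.arrow]
  simp [ι, Preadditive.add_comp, ← hx]

theorem ShortComplex.ShortExact.strictMono_pullback_prodMk_imageSubobject {S : ShortComplex C}
    (hS : S.ShortExact) :
    StrictMono fun A : Subobject S.X₂ =>
      ((Subobject.pullback S.f).obj A, imageSubobject (A.arrow ≫ S.g)) :=
  strictMono_prodMk_of_monotone (Subobject.pullback S.f).monotone
    (monotone_imageSubobject_arrow_comp S.g)
    fun _ _ hAB h₁ h₂ => hS.le_of_pullback_le_of_imageSubobject_le hAB h₁ h₂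

instance : (isNoetherianObject (C := C)).IsClosedUnderExtensions where
  prop_X₂_of_shortExact hS h₁ h₃ :=
    have : WellFoundedGT (Subobject _) := h₁
    have : WellFoundedGT (Subobject _) := h₃
    hS.strictMono_pullback_prodMk_imageSubobject.wellFoundedGT

instance : (isArtinianObject (C := C)).IsClosedUnderExtensions where
  prop_X₂_of_shortExact hS h₁ h₃ :=
    have : WellFoundedLT (Subobject _) := h₁
    have : WellFoundedLT (Subobject _) := h₃
    hS.strictMono_pullback_prodMk_imageSubobject.wellFoundedLT

namespace ObjectProperty

variable (P : ObjectProperty C)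

theorem supClosed_subobject [P.IsClosedUnderQuotients] [P.IsClosedUnderExtensions] (X : C) :
    SupClosed {A : Subobject X | P A} := by
  intro A hA B hB
  rw [Set.mem_ofPred_eq, ← Subobject.imageSubobject_biprod_desc_arrow]
  exact P.prop_of_epi (factorThruImageSubobject _) (P.prop_biprod hA hB)

theorem hasTerminal_costructuredArrow_ι [P.ContainsZero] [P.IsClosedUnderQuotients]
    [P.IsClosedUnderExtensions] (X : C) [IsNoetherianObject X] :
    HasTerminal (CostructuredArrow P.ι X) := by
  obtain ⟨M, hM, hMgreatest⟩ :=
    (P.supClosed_subobject X).exists_isGreatest ⟨⊥, P.prop_of_isZero (Subobject.isZero_bot X)⟩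
  have himage {Y : C} (f : Y ⟶ X) (hY : P Y) : imageSubobject f ≤ M :=
    hMgreatest (P.prop_of_epi (factorThruImageSubobject f) hY)
  let N : P.FullSubcategory := ⟨M, hM⟩
  refine IsTerminal.hasTerminal (X := CostructuredArrow.mk (Y := N) M.arrow) ?_
  refine IsTerminal.ofUniqueHom (fun B => CostructuredArrow.homMk (ObjectProperty.homMk
    (factorThruImageSubobject B.hom ≫ Subobject.ofLE _ _ (himage B.hom B.left.property)))
    (by simp)) fun B m => ?_
  apply CostructuredArrow.hom_ext
  apply ObjectProperty.hom_ext
  rw [← cancel_mono M.arrow]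
  simpa using CostructuredArrow.w m

theorem isLeftAdjoint_ι [P.ContainsZero] [P.IsClosedUnderQuotients] [P.IsClosedUnderExtensions]
    [∀ X : C, IsNoetherianObject X] : P.ι.IsLeftAdjoint :=
  have := P.hasTerminal_costructuredArrow_ι
  isLeftAdjoint_of_costructuredArrowTerminals _

instance [P.IsClosedUnderSubobjects] : P.op.IsClosedUnderQuotients where
  prop_of_epi f _ h := P.prop_of_mono f.unop h

instance [P.IsClosedUnderExtensions] : P.op.IsClosedUnderExtensions where
  prop_X₂_of_shortExact hS h₁ h₃ := P.prop_X₂_of_shortExact hS.unop h₃ h₁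

theorem isRightAdjoint_ι [P.ContainsZero] [P.IsClosedUnderSubobjects] [P.IsClosedUnderExtensions]
    [∀ X : C, IsArtinianObject X] : P.ι.IsRightAdjoint := by
  have (X : Cᵒᵖ) : IsNoetherianObject X := isNoetherianObject_op X.unop
  have := P.op.isLeftAdjoint_ι
  have : (P.opEquivalence.inverse ⋙ P.op.ι).IsLeftAdjoint := Functor.isLeftAdjoint_comp _ _
  have : P.ι.op.IsLeftAdjoint :=
    Functor.isLeftAdjoint_of_iso (F := P.opEquivalence.inverse ⋙ P.op.ι) (P.op.liftCompιIso _ _)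
  exact ⟨_, ⟨(Adjunction.ofIsLeftAdjoint P.ι.op).unop⟩⟩

end ObjectProperty

end CategoryTheory

section

variable {C : Type u} [Category.{v} C] [Abelian C]

theorem ObjFiniteLength.prop_of_simple {P : ObjectProperty C}
    [P.ContainsZero] [P.IsClosedUnderIsomorphisms] [P.IsClosedUnderExtensions]
    (hP : ∀ (X : C) [Simple X], P X) {X : C} (hX : ObjFiniteLength X) : P X := by
  induction hX with
  | of_isZero X hX => exact P.prop_of_isZero hX
  | of_shortExact S hS _ h₃ ih => exact P.prop_X₂_of_shortExact hS ih (hP _)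

theorem ObjFiniteLength.isNoetherianObject {X : C}
    (hX : ObjFiniteLength X) : IsNoetherianObject X :=
  ⟨hX.prop_of_simple (P := CategoryTheory.isNoetherianObject) fun _ _ =>
    @Finite.to_wellFoundedGT _ IsSimpleOrder.instFinite _⟩

theorem ObjFiniteLength.isArtinianObject {X : C}
    (hX : ObjFiniteLength X) : IsArtinianObject X :=
  ⟨hX.prop_of_simple (P := CategoryTheory.isArtinianObject) fun _ _ =>
    @Finite.to_wellFoundedLT _ IsSimpleOrder.instFinite _⟩

end

/-- if every object of an abelian category `C` has finite length and
`P` is a Serre subcategory (nonempty, closed under subobjects, quotients and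
extensions), then the full inclusion of the subcategory of objects satisfying `P`
admits both a left adjoint and a right adjoint. -/
theorem statement1 {C : Type u} [Category.{v} C] [Abelian C]
    (hlen : ∀ X : C, ObjFiniteLength X)
    (P : C → Prop)
    (hne : ∃ X, P X)
    (hsub : ∀ ⦃X Y : C⦄ (f : X ⟶ Y), Mono f → P Y → P X)
    (hquot : ∀ ⦃X Y : C⦄ (f : X ⟶ Y), Epi f → P X → P Y)
    (hext : ∀ S : ShortComplex C, S.ShortExact → P S.X₁ → P S.X₃ → P S.X₂) :
    (ObjectProperty.ι P).IsRightAdjoint ∧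
      (ObjectProperty.ι P).IsLeftAdjoint := by
  obtain ⟨Y, hY⟩ := hne
  have : ObjectProperty.IsSerreClass P :=
    { exists_zero :=
        ⟨_, Subobject.isZero_bot Y, hsub (⊥ : Subobject Y).arrow inferInstance hY⟩
      prop_of_mono := fun f _ => hsub f inferInstance
      prop_of_epi := fun f _ => hquot f inferInstance
      prop_X₂_of_shortExact := fun hS => hext _ hS }
  have (X : C) : IsNoetherianObject X := (hlen X).isNoetherianObject
  have (X : C) : IsArtinianObject X := (hlen X).isArtinianObject
  exact ⟨ObjectProperty.isRightAdjoint_ι P, ObjectProperty.isLeftAdjoint_ι P⟩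
end

section
/- Let A be an abelian category with all objects of finite length and let s be a simple object. Call an epimorphism x → s an 'indecomposable cover' of s if s is the cosocle (largest semisimple quotient) of x. Then: (a) every epimorphism y → s admits a subobject of y which is an indecomposable cover of s; and (b) if x → s is an indecomposable cover and f : y → x is any morphism over s (i.e., the composite y → x → s equals a given epimorphism y → s), then f is an epimorphism. -/
/-!
(a) Among the subobjects `x ⊆ y` that still map onto `s`, take one of minimal length, so that
no proper subobject of `x` maps onto `s`. A morphism `q` from `x` to a simple object then vanishes
on `ker π`: `ker q` is proper, so it maps to zero in `s`, and `π` factors through `q` by a nonzero,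
hence monic, map to `s`. Decomposing a semisimple target into simples, every morphism from `x` to
it vanishes on `ker π` and so factors through `π`.

(b) If `f : y ⟶ x` were not epi, a simple quotient `t` of `coker f` would give an epimorphism
`x ⟶ t` factoring through `π` as some `u : s ⟶ t`. Then `p ≫ u = 0`, so `u = 0` and this
epimorphism onto the nonzero object `t` would be zero.
-/

open CategoryTheory Limits

attribute [local instance] CategoryTheory.Abelian.hasFiniteBiproducts

universe v u

/-- An object is semisimple if it is a finite direct sum of simple objects. -/
def IsSemisimpleObj {C : Type u} [Category.{v} C] [Abelian C] (t : C) : Prop :=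
  ∃ (n : ℕ) (f : Fin n → C), (∀ i, Simple (f i)) ∧ Nonempty (t ≅ ⨁ f)

/-- An epimorphism `π : x ⟶ s` is an indecomposable cover if it exhibits `s` as
the cosocle (largest semisimple quotient) of `x`, i.e. every epimorphism from `x`
to a semisimple object factors through `π`. -/
def IsIndecCover {C : Type u} [Category.{v} C] [Abelian C] {x s : C}
    (π : x ⟶ s) : Prop :=
  Epi π ∧ ∀ (t : C) (q : x ⟶ t), Epi q → IsSemisimpleObj t →
    ∃ u : s ⟶ t, π ≫ u = q

section

variable {C : Type u} [Category.{v} C] [Abelian C]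

inductive LengthLE : C → ℕ → Prop
  | of_isZero (X : C) (n : ℕ) : IsZero X → LengthLE X n
  | of_shortExact (S : ShortComplex C) (n : ℕ) : S.ShortExact → LengthLE S.X₁ n →
      Simple S.X₃ → LengthLE S.X₂ (n + 1)

namespace LengthLE

lemma mono {X : C} {n m : ℕ} (h : LengthLE X n) (hnm : n ≤ m) : LengthLE X m := by
  induction h generalizing m with
  | of_isZero X n hX => exact of_isZero X m hX
  | of_shortExact S n hS _ h₃ ih =>
    obtain ⟨m, rfl⟩ : ∃ m', m = m' + 1 := ⟨m - 1, by omega⟩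
    exact of_shortExact S m hS (ih (by omega)) h₃

lemma of_mono {X : C} {n : ℕ} (h : LengthLE X n) {K : C} (ι : K ⟶ X) [Mono ι] :
    LengthLE K n ∧ (¬ Epi ι → ∃ m < n, LengthLE K m) := by
  induction h generalizing K with
  | of_isZero X n hX =>
    exact ⟨of_isZero K n (IsZero.of_mono ι hX), fun h => (h (hX.epi ι)).elim⟩
  | of_shortExact S n hS _ h₃ ih =>
    have := hS.mono_f
    by_cases hg : ι ≫ S.g = 0
    · obtain ⟨ι', hι'⟩ := hS.exact.lift' ι hg
      have : Mono ι' := mono_of_mono_fac hι'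
      have hK := (ih ι').1
      exact ⟨hK.mono n.le_succ, fun _ => ⟨n, n.lt_succ_self, hK⟩⟩
    · -- `K` is an extension of `S.X₃` by its intersection with `S.X₁`
      have : Epi (ι ≫ S.g) := epi_of_nonzero_to_simple hg
      let T := ShortComplex.mk (kernel.ι (ι ≫ S.g)) (ι ≫ S.g) (kernel.condition _)
      have hT : T.ShortExact := ⟨ShortComplex.exact_of_f_is_kernel _ (kernelIsKernel _)⟩
      obtain ⟨j, hj⟩ := hS.exact.lift' (kernel.ι (ι ≫ S.g) ≫ ι)
        (by rw [Category.assoc, kernel.condition])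
      have : Mono j := mono_of_mono_fac hj
      let φ : T ⟶ S := { τ₁ := j, τ₂ := ι, τ₃ := 𝟙 _ }
      refine ⟨of_shortExact T n hT (ih j).1 h₃, fun hι => ?_⟩
      have hj : ¬ Epi j := fun _ =>
        have := isIso_of_mono_of_epi j
        hι (ShortComplex.isIso₂_of_shortExact_of_isIso₁₃ φ hT hS).epi_of_iso
      obtain ⟨m, hm, hK⟩ := (ih j).2 hj
      exact ⟨m + 1, by omega, of_shortExact T m hT hK h₃⟩

end LengthLE

lemma ObjFiniteLength.exists_lengthLE {X : C} (h : ObjFiniteLength X) : ∃ n, LengthLE X n := by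
  induction h with
  | of_isZero X hX => exact ⟨0, .of_isZero X 0 hX⟩
  | of_shortExact S hS _ h₃ ih =>
    obtain ⟨n, hn⟩ := ih
    exact ⟨n + 1, .of_shortExact S n hS hn h₃⟩

lemma ObjFiniteLength.exists_simple_quotient {X : C} (h : ObjFiniteLength X) (hX : ¬ IsZero X) :
    ∃ (t : C) (q : X ⟶ t), Simple t ∧ Epi q := by
  cases h with
  | of_isZero X hX' => exact (hX hX').elim
  | of_shortExact S hS _ h₃ => exact ⟨S.X₃, S.g, h₃, hS.epi_g⟩

lemma isSemisimpleObj_of_simple (t : C) [Simple t] : IsSemisimpleObj t :=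
  ⟨1, fun _ => t, fun _ => inferInstance, ⟨(biproductUniqueIso (fun _ : Fin 1 => t)).symm⟩⟩

section Cover

variable {x s : C}

def IsSubobjectMinimal (π : x ⟶ s) : Prop :=
  ∀ ⦃K : C⦄ (k : K ⟶ x) [Mono k], Epi (k ≫ π) → Epi k

lemma kernel_ι_comp_eq_zero_of_simple {π : x ⟶ s} [Simple s] [Epi π]
    (hmin : IsSubobjectMinimal π) {t : C} [Simple t] (q : x ⟶ t) : kernel.ι π ≫ q = 0 := by
  by_cases hq : q = 0
  · rw [hq, comp_zero]
  have : Epi q := epi_of_nonzero_to_simple hq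
  have hker : kernel.ι q ≫ π = 0 := by
    by_contra h
    have := hmin (kernel.ι q) (epi_of_nonzero_to_simple h)
    exact hq (zero_of_epi_comp _ (kernel.condition q))
  set v := Abelian.epiDesc q π hker
  have hv : q ≫ v = π := Abelian.comp_epiDesc q π hker
  have : Mono v := mono_of_nonzero_from_simple fun h =>
    Simple.not_isZero s (IsZero.of_epi_eq_zero π (by rw [← hv, h, comp_zero]))
  rw [← cancel_mono v, Category.assoc, hv, kernel.condition, zero_comp]

lemma kernel_ι_comp_eq_zero_of_isSemisimpleObj {π : x ⟶ s} [Simple s] [Epi π]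
    (hmin : IsSubobjectMinimal π) {t : C} (ht : IsSemisimpleObj t) (q : x ⟶ t) :
    kernel.ι π ≫ q = 0 := by
  obtain ⟨n, f, hf, ⟨e⟩⟩ := ht
  rw [← cancel_mono e.hom, zero_comp]
  ext i
  have := hf i
  simpa using kernel_ι_comp_eq_zero_of_simple hmin (q ≫ e.hom ≫ biproduct.π f i)

lemma IsSubobjectMinimal.isIndecCover {π : x ⟶ s} [Simple s] [Epi π]
    (hmin : IsSubobjectMinimal π) : IsIndecCover π :=
  ⟨inferInstance, fun _ q _ ht =>
    ⟨_, Abelian.comp_epiDesc π q (kernel_ι_comp_eq_zero_of_isSemisimpleObj hmin ht q)⟩⟩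

lemma IsIndecCover.epi_of_epi_comp {π : x ⟶ s} (hπ : IsIndecCover π) {y : C} (f : y ⟶ x)
    [Epi (f ≫ π)] (hf : ObjFiniteLength (cokernel f)) : Epi f := by
  by_contra hnf
  have hcok : ¬ IsZero (cokernel f) := fun h =>
    hnf (Abelian.epi_of_cokernel_π_eq_zero _ (h.eq_of_tgt _ _))
  obtain ⟨t, q, ht, hq⟩ := hf.exists_simple_quotient hcok
  obtain ⟨u, hu⟩ := hπ.2 t (cokernel.π f ≫ q) (epi_comp _ _) (isSemisimpleObj_of_simple t)
  have hu₀ : u = 0 := by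
    rw [← cancel_epi (f ≫ π), comp_zero, Category.assoc, hu, cokernel.condition_assoc, zero_comp]
  exact Simple.not_isZero t
    (IsZero.of_epi_eq_zero (cokernel.π f ≫ q) (by rw [← hu, hu₀, comp_zero]))

end Cover

lemma exists_isSubobjectMinimal_comp {y s : C} (hy : ObjFiniteLength y) (p : y ⟶ s) [Epi p] :
    ∃ (x : C) (ι : x ⟶ y), Mono ι ∧ Epi (ι ≫ p) ∧ IsSubobjectMinimal (ι ≫ p) := by
  classical
  have hex : ∃ n, ∃ (x : C) (ι : x ⟶ y), Mono ι ∧ Epi (ι ≫ p) ∧ LengthLE x n := by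
    obtain ⟨n, hn⟩ := hy.exists_lengthLE
    exact ⟨n, y, 𝟙 y, inferInstance, by rwa [Category.id_comp], hn⟩
  obtain ⟨x, ι, hι, hιp, hx⟩ := Nat.find_spec hex
  refine ⟨x, ι, hι, hιp, fun K k _ hk => by_contra fun hnk => ?_⟩
  obtain ⟨m, hm, hK⟩ := (hx.of_mono k).2 hnk
  exact Nat.find_min hex hm ⟨K, k ≫ ι, mono_comp _ _, by rwa [Category.assoc], hK⟩

end

/-- in an abelian category with all objects of finite length, with
`s` a simple object: (a) every epimorphism `y → s` admits a subobject of `y`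
which is an indecomposable cover of `s`; (b) any morphism over `s` from an object
equipped with an epimorphism onto `s` to an indecomposable cover of `s` is an
epimorphism. -/
theorem statement5 {C : Type u} [Category.{v} C] [Abelian C]
    (hlen : ∀ X : C, ObjFiniteLength X)
    (s : C) (hs : Simple s) :
    (∀ (y : C) (p : y ⟶ s), Epi p →
      ∃ (x : C) (ι : x ⟶ y), Mono ι ∧ IsIndecCover (ι ≫ p)) ∧
    (∀ (x : C) (π : x ⟶ s), IsIndecCover π →
      ∀ (y : C) (p : y ⟶ s) (f : y ⟶ x), Epi p → f ≫ π = p → Epi f) := by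
  refine ⟨fun y p _ => ?_, fun x π hπ y p f _ hfp => ?_⟩
  · obtain ⟨x, ι, hι, _, hmin⟩ := exists_isSubobjectMinimal_comp (hlen y) p
    exact ⟨x, ι, hι, hmin.isIndecCover⟩
  · have : Epi (f ≫ π) := hfp ▸ ‹Epi p›
    exact hπ.epi_of_epi_comp f (hlen _)
end

section
/- Let A' →(i_*) A →(j*) A'' be a recollement triple of abelian categories. Define j_{!*} : A'' → A by sending a'' to the image of the canonical map j_!(a'') → j_*(a''). Then j_{!*} sends simple objects of A'' to simple objects of A. -/
/-!
The functor `j^*` is exact, having adjoints on both sides, and it inverts `j_! c ⟶ j_* c`, so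
`j^* (j_{!*} c) ≅ j^* j_* c ≅ c` is simple. It remains to see that `j_{!*} c` has no nonzero
subobject and no nonzero quotient killed by `j^*`. A map `Y ⟶ j_* c` corresponds to a map
`j^* Y ⟶ c`, so it vanishes when `j^* Y = 0`; as `j_{!*} c ⟶ j_* c` is mono, such a subobject is
zero. Dually, `j_! c ⟶ j_{!*} c` is epi and maps `j_! c ⟶ Q` vanish when `j^* Q = 0`. Now a
nonzero subobject `Y` of `j_{!*} c` has `j^* Y ≠ 0`, hence `j^* Y = j^* (j_{!*} c)` by
simplicity, so its cokernel is killed by `j^*` and therefore zero.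
-/

open CategoryTheory Limits ZeroObject

universe w v u₁ u₂ u₃

variable (A₁ : Type u₁) (A₂ : Type u₂) (A₃ : Type u₃)
  [Category.{v} A₁] [Category.{v} A₂] [Category.{v} A₃]
  [Abelian A₁] [Abelian A₂] [Abelian A₃]

/-- A recollement triple of abelian categories `A₁ ⥤ A₂ ⥤ A₃`: the exact functors
`i = i_*` and `j = j^*` admit adjoints on both sides (`iL ⊣ i ⊣ iR`,
`jL ⊣ j ⊣ jR`, i.e. `i^* ⊣ i_* ⊣ i^!` and `j_! ⊣ j^* ⊣ j_*`), `i` is a full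
embedding whose essential image is the kernel of `j`, and `j` exhibits `A₃` as
the Serre quotient of `A₂` by that kernel (equivalently, `j_!` and `j_*` are
fully faithful and `j` is a localization at the class of morphisms it inverts). -/
structure Recollement where
  i : A₁ ⥤ A₂
  j : A₂ ⥤ A₃
  iPFL : PreservesFiniteLimits i
  iPFC : PreservesFiniteColimits i
  jPFL : PreservesFiniteLimits j
  jPFC : PreservesFiniteColimits j
  iL : A₂ ⥤ A₁
  iR : A₂ ⥤ A₁
  adjiL : iL ⊣ i
  adjiR : i ⊣ iR
  jL : A₃ ⥤ A₂
  jR : A₃ ⥤ A₂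
  adjjL : jL ⊣ j
  adjjR : j ⊣ jR
  iFull : i.Full
  iFaithful : i.Faithful
  jLFull : jL.Full
  jLFaithful : jL.Faithful
  jRFull : jR.Full
  jRFaithful : jR.Faithful
  ker : ∀ X : A₂, IsZero (j.obj X) ↔ ∃ Y : A₁, Nonempty (i.obj Y ≅ X)
  isLoc : j.IsLocalization ((MorphismProperty.isomorphisms A₃).inverseImage j)

namespace Recollement

variable {A₁ A₂ A₃} (R : Recollement A₁ A₂ A₃)

/-- The canonical map `j_! c ⟶ j_* c`, adjoint to the identity of `j^*`. -/
noncomputable def theta (c : A₃) : R.jL.obj c ⟶ R.jR.obj c :=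
  haveI := R.jRFull
  haveI := R.jRFaithful
  (R.adjjL.homEquiv c (R.jR.obj c)).symm (inv (R.adjjR.counit.app c))

end Recollement

open CategoryTheory Limits

namespace CategoryTheory

variable {C D : Type*} [Category C] [Category D]

lemma Adjunction.eq_zero_of_isZero_leftAdjoint_obj [HasZeroMorphisms C] {F : C ⥤ D}
    {G : D ⥤ C} (adj : F ⊣ G) {Y : C} (hY : IsZero (F.obj Y)) {c : D} (f : Y ⟶ G.obj c) :
    f = 0 :=
  (adj.homEquiv Y c).symm.injective (hY.eq_of_src _ _)

lemma Adjunction.eq_zero_of_isZero_rightAdjoint_obj [HasZeroMorphisms C] {F : C ⥤ D}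
    {L : D ⥤ C} (adj : L ⊣ F) {Q : C} (hQ : IsZero (F.obj Q)) {c : D} (f : L.obj c ⟶ Q) :
    f = 0 :=
  (adj.homEquiv c Q).injective (hQ.eq_of_tgt _ _)

lemma simple_of_simple_obj [Abelian C] [HasZeroMorphisms D] (F : C ⥤ D)
    [F.PreservesMonomorphisms] [F.PreservesEpimorphisms] [F.PreservesZeroMorphisms] {X : C}
    [Simple (F.obj X)]
    (hsub : ∀ {Y : C} (k : Y ⟶ X) [Mono k], IsZero (F.obj Y) → IsZero Y)
    (hquot : ∀ {Q : C} (q : X ⟶ Q) [Epi q], IsZero (F.obj Q) → IsZero Q) :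
    Simple X := by
  refine ⟨fun {Y} f _ => ⟨fun _ hf => ?_, fun hf => ?_⟩⟩
  · exact Simple.not_isZero (F.obj X) (F.map_isZero (IsZero.of_epi_eq_zero f hf))
  · have hFf : F.map f ≠ 0 := fun h =>
      hf ((hsub f (IsZero.of_mono_eq_zero _ h)).eq_of_src _ _)
    have := isIso_of_mono_of_nonzero hFf
    have hπ : F.map (cokernel.π f) = 0 := by
      rw [← cancel_epi (F.map f), ← F.map_comp, cokernel.condition, F.map_zero, comp_zero]
    have hcoker : IsZero (cokernel f) := hquot (cokernel.π f) (IsZero.of_epi_eq_zero _ hπ)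
    have := Abelian.epi_of_cokernel_π_eq_zero f (hcoker.eq_of_tgt _ _)
    exact isIso_of_mono_of_epi f

lemma simple_image_of_isIso_map [Abelian C] [Abelian D] {F : C ⥤ D} {L G : D ⥤ C}
    (adjL : L ⊣ F) (adjR : F ⊣ G) [G.Full] [G.Faithful] {c : D} [Simple c]
    (θ : L.obj c ⟶ G.obj c) [IsIso (F.map θ)] : Simple (image θ) := by
  have := F.preservesMonomorphisms_of_adjunction adjL
  have := F.preservesEpimorphisms_of_adjunction adjR
  have := adjR.isLeftAdjoint
  have := F.preservesZeroMorphisms_of_isLeftAdjoint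
  have : Epi (F.map (image.ι θ)) :=
    epi_of_epi_fac (h := F.map θ) (by rw [← F.map_comp, image.fac])
  have := isIso_of_mono_of_epi (F.map (image.ι θ))
  have : Simple (F.obj (image θ)) :=
    Simple.of_iso (Y := c) (asIso (F.map (image.ι θ)) ≪≫ asIso (adjR.counit.app c))
  refine simple_of_simple_obj F (fun k _ hY => ?_) (fun q _ hQ => ?_)
  · exact IsZero.of_mono_eq_zero _
      (adjR.eq_zero_of_isZero_leftAdjoint_obj hY (k ≫ image.ι θ))
  · exact IsZero.of_epi_eq_zero _
      (adjL.eq_zero_of_isZero_rightAdjoint_obj hQ (factorThruImage θ ≫ q))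

end CategoryTheory

namespace Recollement

variable {A₁ A₂ A₃} (R : Recollement A₁ A₂ A₃)

instance isIso_j_map_theta (c : A₃) : IsIso (R.j.map (R.theta c)) := by
  have := R.jLFull; have := R.jLFaithful; have := R.jRFull; have := R.jRFaithful
  have h : R.j.map (R.theta c) = inv (R.adjjL.unit.app c) ≫ inv (R.adjjR.counit.app c) := by
    rw [IsIso.eq_inv_comp, ← R.adjjL.homEquiv_unit c (R.jR.obj c), theta, Equiv.apply_symm_apply]
  rw [h]
  infer_instance

end Recollement

/-- for a recollement triple `A₁ ⥤ A₂ ⥤ A₃`, the intermediate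
extension functor `j_{!*} : c ↦ image (j_! c ⟶ j_* c)` sends simple objects of
`A₃` to simple objects of `A₂`. -/
theorem statement12 (R : Recollement A₁ A₂ A₃) (c : A₃) (hc : Simple c) :
    Simple (image (R.theta c)) :=
  have := R.jRFull
  have := R.jRFaithful
  simple_image_of_isIso_map R.adjjL R.adjjR (R.theta c)
end

section
/- Let A' →(i_*) A →(j*) A'' be a recollement triple of abelian categories. Then every simple object of A is either isomorphic to i_*(s) for a simple object s of A', or isomorphic to j_{!*}(s) for a simple object s of A'', where j_{!*}(s) is the image of the canonical map j_!(s) → j_*(s). -/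
open CategoryTheory Limits ZeroObject

universe w v u₁ u₂ u₃

variable (A₁ : Type u₁) (A₂ : Type u₂) (A₃ : Type u₃)
  [Category.{v} A₁] [Category.{v} A₂] [Category.{v} A₃]
  [Abelian A₁] [Abelian A₂] [Abelian A₃]

/-! If `j^* X = 0`, then `X` lies in the essential image of the fully faithful `i_*`, which
reflects simplicity. Otherwise the unit `X ⟶ j_* j^* X` and the counit `j_! j^* X ⟶ X` are
nonzero, hence mono and epi since `X` is simple; their composite is the canonical map
`j_! j^* X ⟶ j_* j^* X`, so `X` is its image. Finally `j^* X` is simple: a nonzero subobject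
`T ↪ j^* X` is adjoint to a nonzero, hence epi, map `j_! T ⟶ X`, and applying `j^*` shows that
`T ↪ j^* X` is epi. -/

namespace CategoryTheory.Adjunction

variable {C D : Type*} [Category* C] [Category* D]

section ZeroMorphisms

variable [HasZeroMorphisms C] [HasZeroMorphisms D] {F : C ⥤ D} {G : D ⥤ C}

theorem unit_app_ne_zero (adj : F ⊣ G) [F.PreservesZeroMorphisms] {X : C}
    (hX : ¬IsZero (F.obj X)) : adj.unit.app X ≠ 0 := fun h ↦ hX <| by
  rw [IsZero.iff_id_eq_zero, ← adj.left_triangle_components X, h, F.map_zero, zero_comp]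

theorem counit_app_ne_zero (adj : F ⊣ G) [G.PreservesZeroMorphisms] {Y : D}
    (hY : ¬IsZero (G.obj Y)) : adj.counit.app Y ≠ 0 := fun h ↦ hY <| by
  rw [IsZero.iff_id_eq_zero, ← adj.right_triangle_components Y, h, G.map_zero, comp_zero]

end ZeroMorphisms

theorem simple_obj_of_isIso_unit [Abelian C] [Abelian D] {L : D ⥤ C} {F : C ⥤ D} (adj : L ⊣ F)
    [IsIso adj.unit] [F.PreservesEpimorphisms] {X : C} [Simple X] (hX : ¬IsZero (F.obj X)) :
    Simple (F.obj X) where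
  mono_isIso_iff_nonzero {T} t _ := by
    have := adj.isRightAdjoint
    refine ⟨fun _ ht ↦ hX ?_, fun ht ↦ ?_⟩
    · subst ht
      exact ((isIsoZero_iff_source_target_isZero T (F.obj X)).mp ‹_›).2
    · obtain ⟨g, rfl⟩ := (adj.homEquiv T X).surjective t
      have : Epi g := epi_of_nonzero_to_simple fun h ↦ ht <| by
        rw [h, adj.homEquiv_unit, F.map_zero, comp_zero]
      have : Epi (adj.homEquiv T X g) := by
        rw [adj.homEquiv_unit]
        infer_instance
      exact isIso_of_mono_of_epi _

end CategoryTheory.Adjunction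

namespace Recollement

variable {A₁ A₂ A₃} (R : Recollement A₁ A₂ A₃)

attribute [local instance] iFull iFaithful jLFull jLFaithful jRFull jRFaithful

instance : R.i.IsRightAdjoint := R.adjiL.isRightAdjoint
instance : R.j.IsLeftAdjoint := R.adjjR.isLeftAdjoint

omit [Abelian A₁] [Abelian A₂] [Abelian A₃] in
theorem theta_j_obj (X : A₂) :
    R.theta (R.j.obj X) = R.adjjL.counit.app X ≫ R.adjjR.unit.app X := by
  rw [theta, Equiv.symm_apply_eq, Adjunction.homEquiv_unit, Functor.map_comp,
    R.adjjL.right_triangle_components_assoc, IsIso.eq_inv_of_inv_hom_id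
      (R.adjjR.left_triangle_components X)]

omit [Abelian A₃] in
theorem simple_of_simple_i_obj {Y : A₁} [Simple (R.i.obj Y)] : Simple Y :=
  R.i.simple_of_simple_obj Y

omit [Abelian A₁] in
theorem simple_j_obj {X : A₂} [Simple X] (hX : ¬IsZero (R.j.obj X)) : Simple (R.j.obj X) :=
  R.adjjL.simple_obj_of_isIso_unit hX

noncomputable def imageThetaJObjIso {X : A₂} [Simple X] (hX : ¬IsZero (R.j.obj X)) :
    image (R.theta (R.j.obj X)) ≅ X :=
  have : Mono (R.adjjR.unit.app X) :=
    mono_of_nonzero_from_simple (X := X) (R.adjjR.unit_app_ne_zero hX)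
  have : Epi (R.adjjL.counit.app X) :=
    epi_of_nonzero_to_simple (Y := X) (R.adjjL.counit_app_ne_zero hX)
  have : StrongEpi (R.adjjL.counit.app X) := strongEpi_of_epi _
  (image.isoStrongEpiMono _ _ (R.theta_j_obj X).symm).symm

end Recollement

/-- for a recollement triple `A₁ ⥤ A₂ ⥤ A₃`, every simple object
of `A₂` is isomorphic either to `i_*(s)` for a simple `s` of `A₁`, or to
`j_{!*}(s) = image (j_! s ⟶ j_* s)` for a simple `s` of `A₃`. -/
theorem statement13 (R : Recollement A₁ A₂ A₃) (X : A₂) (hX : Simple X) :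
    (∃ s : A₁, Simple s ∧ Nonempty (R.i.obj s ≅ X)) ∨
    (∃ s : A₃, Simple s ∧ Nonempty (image (R.theta s) ≅ X)) := by
  by_cases hz : IsZero (R.j.obj X)
  · obtain ⟨Y, ⟨e⟩⟩ := (R.ker X).mp hz
    have : Simple (R.i.obj Y) := Simple.of_iso e
    exact Or.inl ⟨Y, R.simple_of_simple_i_obj, ⟨e⟩⟩
  · exact Or.inr ⟨R.j.obj X, R.simple_j_obj hz, ⟨R.imageThetaJObjIso hz⟩⟩
end

section
/- Let R : A → B be an exact, faithful functor between abelian categories and let s be an object of A such that for all objects E of A the map Hom_A(E, s) → Hom_B(R E, R s) is bijective. Then for every object c of A the map Ext¹_A(c, s) → Ext¹_B(Rc, Rs) on Yoneda Ext¹-groups is injective. -/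
/-!
Pull the second extension back along `p` to an extension `s ⟶ E ×_c E' ⟶ E`. A morphism of
extensions `E ⟶ E'` is the second projection composed with a section of this pullback extension
sending `i` to `(i, i')`, i.e. it comes from a retraction of `(0, i')` that kills `(i, i')`.
In `B`, the map `R snd - R fst ≫ ψ` kills `R p'`, so it factors through the kernel `R i'`; the
factorisation is such a retraction for the image, and bijectivity of `Hom(-, s) → Hom(R -, R s)`
lifts it, together with both identities, back to `A`.
-/

open CategoryTheory Limits

universe v₁ v₂ u₁ u₂

namespace CategoryTheory.ShortComplex

variable {A : Type*} [Category A] [Abelian A] {s c E E' : A}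
  {i : s ⟶ E} {p : E ⟶ c} {i' : s ⟶ E'} {p' : E' ⟶ c}

lemma shortExact_pullback_lift_zero_fst {w' : i' ≫ p' = 0}
    (hS' : (ShortComplex.mk i' p' w').ShortExact) (p : E ⟶ c) :
    (ShortComplex.mk (pullback.lift 0 i' (by simp [w'])) (pullback.fst p p')
      (pullback.lift_fst _ _ _)).ShortExact := by
  have := hS'.mono_f
  have := hS'.epi_g
  have : Mono (pullback.lift 0 i' (by simp [w']) : s ⟶ pullback p p') :=
    mono_of_mono_fac (pullback.lift_snd _ _ _)
  refine { exact := exact_of_f_is_kernel _ ?_ }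
  refine KernelFork.IsLimit.ofι' _ _ fun {T} t (ht : t ≫ pullback.fst p p' = 0) => ?_
  obtain ⟨u, hu⟩ := KernelFork.IsLimit.lift' hS'.fIsKernel (t ≫ pullback.snd p p')
    (by simp [← pullback.condition, reassoc_of% ht])
  exact ⟨u, pullback.hom_ext (by simp [pullback.lift_fst, ht])
    (by simpa [pullback.lift_snd] using hu)⟩

lemma exists_hom_of_pullback_retraction (w : i ≫ p = 0) {w' : i' ≫ p' = 0}
    (hS' : (ShortComplex.mk i' p' w').ShortExact) (r : pullback p p' ⟶ s)
    (hr : pullback.lift 0 i' (by simp [w']) ≫ r = 𝟙 s)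
    (hir : pullback.lift i i' (by simp [w, w']) ≫ r = 0) :
    ∃ φ : E ⟶ E', i ≫ φ = i' ∧ φ ≫ p' = p := by
  have hS := shortExact_pullback_lift_zero_fst hS' p
  obtain ⟨σ, hσ, hσr⟩ : ∃ σ : E ⟶ pullback p p', σ ≫ pullback.fst p p' = 𝟙 E ∧
      r ≫ pullback.lift 0 i' (by simp [w']) + pullback.fst p p' ≫ σ = 𝟙 (pullback p p') :=
    let σ := Splitting.ofExactOfRetraction _ hS.exact r hr hS.epi_g
    ⟨σ.s, σ.s_g, σ.id⟩
  have hiσ : i ≫ σ = pullback.lift i i' (by simp [w, w']) := by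
    have := pullback.lift i i' (by simp [w, w']) ≫= hσr
    rwa [Preadditive.comp_add, pullback.lift_fst_assoc, reassoc_of% hir, zero_comp, zero_add,
      Category.comp_id] at this
  refine ⟨σ ≫ pullback.snd p p', by rw [reassoc_of% hiσ, pullback.lift_snd], ?_⟩
  rw [Category.assoc, ← pullback.condition, reassoc_of% hσ]

lemma exists_pullback_retraction_of_map {B : Type*} [Category B] [Abelian B] (R : A ⥤ B)
    [PreservesFiniteLimits R] (hhom : ∀ X : A, Function.Bijective (fun f : X ⟶ s => R.map f))
    (w : i ≫ p = 0) {w' : i' ≫ p' = 0} (hS' : (ShortComplex.mk i' p' w').ShortExact)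
    (ψ : R.obj E ⟶ R.obj E') (hψi : R.map i ≫ ψ = R.map i') (hψp : ψ ≫ R.map p' = R.map p) :
    ∃ r : pullback p p' ⟶ s, pullback.lift 0 i' (by simp [w']) ≫ r = 𝟙 s ∧
      pullback.lift i i' (by simp [w, w']) ≫ r = 0 := by
  have hker := isLimitForkMapOfIsLimit' R w' hS'.fIsKernel
  obtain ⟨ρ, hρ⟩ := KernelFork.IsLimit.lift' hker
    (R.map (pullback.snd p p') - R.map (pullback.fst p p') ≫ ψ)
    (by rw [Preadditive.sub_comp, Category.assoc, hψp, ← R.map_comp, ← R.map_comp,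
      pullback.condition, sub_self])
  obtain ⟨r, rfl⟩ := (hhom _).2 ρ
  have := hS'.mono_f
  have key {T : A} (g : T ⟶ pullback p p') (h : T ⟶ s)
      (hg : R.map (g ≫ pullback.snd p p') - R.map (g ≫ pullback.fst p p') ≫ ψ = R.map (h ≫ i')) :
      g ≫ r = h :=
    (hhom T).1 <| (cancel_mono (R.map i')).1 <| by simp_all
  refine ⟨r, key _ _ ?_, key _ _ ?_⟩
  · simp [pullback.lift_fst, pullback.lift_snd]
  · simp [pullback.lift_fst, pullback.lift_snd, hψi]

end CategoryTheory.ShortComplex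

theorem statement16_general {A : Type u₁} [Category.{v₁} A] [Abelian A]
    {B : Type u₂} [Category.{v₂} B] [Abelian B]
    (R : A ⥤ B) [PreservesFiniteLimits R]
    (s : A) (hhom : ∀ E : A, Function.Bijective (fun f : E ⟶ s => R.map f))
    (c : A) :
    ∀ (E E' : A) (i : s ⟶ E) (p : E ⟶ c) (i' : s ⟶ E') (p' : E' ⟶ c)
      (w : i ≫ p = 0) (w' : i' ≫ p' = 0),
      (ShortComplex.mk i p w).ShortExact → (ShortComplex.mk i' p' w').ShortExact →
      (∃ ψ : R.obj E ⟶ R.obj E', R.map i ≫ ψ = R.map i' ∧ ψ ≫ R.map p' = R.map p) →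
      ∃ φ : E ⟶ E', i ≫ φ = i' ∧ φ ≫ p' = p := by
  intro E E' i p i' p' w w' _ hS' ⟨ψ, hψi, hψp⟩
  obtain ⟨r, hr, hir⟩ := ShortComplex.exists_pullback_retraction_of_map R hhom w hS' ψ hψi hψp
  exact ShortComplex.exists_hom_of_pullback_retraction w hS' r hr hir

/-- let `R : A ⥤ B` be an exact faithful functor between abelian
categories, and `s` an object of `A` such that `Hom_A(E, s) → Hom_B(R E, R s)` is
bijective for all `E`.  Then for every `c` the induced map
`Ext¹_A(c, s) → Ext¹_B(R c, R s)` is injective: if the images of two extensions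
of `c` by `s` are equivalent, then the extensions are already equivalent. -/
theorem statement16 {A : Type u₁} [Category.{v₁} A] [Abelian A]
    {B : Type u₂} [Category.{v₂} B] [Abelian B]
    (R : A ⥤ B) [PreservesFiniteLimits R] [PreservesFiniteColimits R] [R.Faithful]
    (s : A) (hhom : ∀ E : A, Function.Bijective (fun f : E ⟶ s => R.map f))
    (c : A) :
    ∀ (E E' : A) (i : s ⟶ E) (p : E ⟶ c) (i' : s ⟶ E') (p' : E' ⟶ c)
      (w : i ≫ p = 0) (w' : i' ≫ p' = 0),
      (ShortComplex.mk i p w).ShortExact → (ShortComplex.mk i' p' w').ShortExact →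
      (∃ ψ : R.obj E ⟶ R.obj E', R.map i ≫ ψ = R.map i' ∧ ψ ≫ R.map p' = R.map p) →
      ∃ φ : E ⟶ E', i ≫ φ = i' ∧ φ ≫ p' = p :=
  statement16_general R s hhom c
end
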